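/- Let (H_ω)_{ω∈Ω} be a measurable family of Jacobi matrices over a probability space (Ω, P) whose averaged spectral measure ν(B) = E⟨δ₀, χ_B(H_ω) δ₀⟩ satisfies ν([−ε, ε]) ≤ C′ε for all ε > 0. Let q > 0, α > 0 and set η = min{q, 1/2}. Then there exists a constant C₁ such that for all T ≥ 2: Σ_{0 ≤ |n| ≤ T^{1+α}} |n|^q ∫₀^{T^{−η}} (dE/(πT)) · E|G_ω^{E+i/T}(0,n)|² ≤ C₁ · T^{q − η + αq}. -/

import Mathlib

/-!
By the Ward identity `∑ₙ |G^z(0,n)|² = Im G^z(0,0) / Im z`, once `|n|^q` is bounded by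
`T^{(1+α)q}` the sum over `n` of the averaged `|G|²` at `z = E + i/T` is at most `T` times the
averaged `Im G^z(0,0)`, which by the Borel-transform identity is the Poisson integral
`∫ (1/T) / ((E - e)² + T⁻²) dν(e)`. Integrating over `E ∈ [0, b]`, `b = T^{-η}`, and exchanging
the integrals, the points `|e| ≤ 2b` contribute at most `π T · ν([-2b, 2b]) ≤ 2π C' b T`, while
for `|e| > 2b` the `E`-integral is `O(b / (e² + b²))`, whose `ν`-integral is `O(1 / b)` because
`ν` has mass at most one. Dividing by `π T` leaves `O(b + 1 / (T b)) = O(b)` since `η ≤ 1/2`.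
-/

open MeasureTheory Complex

noncomputable section

abbrev Ltwo := lp (fun _ : ℤ => ℂ) 2

/-- The delta function at site `n` in `ℓ²(ℤ)`. -/
def delta (n : ℤ) : Ltwo := lp.single 2 n 1

/-- A Jacobi matrix with hopping terms in `[c,C]` and potential bounded by `C`:
a bounded self-adjoint operator on `ℓ²(ℤ)` acting by
`(Hψ)(n) = t_{n+1} ψ(n+1) + v_n ψ(n) + t_n ψ(n-1)`. -/
structure JacobiMatrix (c C : ℝ) where
  t : ℤ → ℝ
  v : ℤ → ℝ
  t_lb : ∀ n, c ≤ t n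
  t_ub : ∀ n, t n ≤ C
  v_bd : ∀ n, |v n| ≤ C
  H : Ltwo →L[ℂ] Ltwo
  selfadj : IsSelfAdjoint H
  apply_eq : ∀ (ψ : Ltwo) (n : ℤ),
    (H ψ : ∀ _ : ℤ, ℂ) n
      = (t (n+1) : ℂ) * (ψ : ∀ _ : ℤ, ℂ) (n+1) + (v n : ℂ) * (ψ : ∀ _ : ℤ, ℂ) n
        + (t n : ℂ) * (ψ : ∀ _ : ℤ, ℂ) (n-1)

/-- The Green function `G^z(n,m) = ⟨δ_n, (H-z)⁻¹ δ_m⟩`. -/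
def green {c C : ℝ} (J : JacobiMatrix c C) (z : ℂ) (n m : ℤ) : ℂ :=
  inner (𝕜 := ℂ) (delta n) (Ring.inverse (J.H - z • 1) (delta m))

open scoped ComplexConjugate Real

theorem Ring.inverse_neg {R : Type*} [Ring R] (a : R) : Ring.inverse (-a) = -Ring.inverse a := by
  by_cases h : IsUnit a
  · obtain ⟨u, rfl⟩ := h
    rw [← Units.val_neg, Ring.inverse_unit, Ring.inverse_unit, ← Units.val_neg, inv_neg]
  · rw [Ring.inverse_non_unit _ h, Ring.inverse_non_unit _ (by simpa using h), neg_zero]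

theorem spectrum.resolvent_sub_resolvent_eq_smul_mul {R A : Type*} [CommRing R] [Ring A]
    [Algebra R A] {a : A} {r s : R} (hr : r ∈ resolventSet R a) (hs : s ∈ resolventSet R a) :
    resolvent a r - resolvent a s = (s - r) • (resolvent a r * resolvent a s) := by
  have hdiff : (algebraMap R A s - a) - (algebraMap R A r - a) = (s - r) • 1 := by
    rw [Algebra.smul_def, mul_one, map_sub]; abel
  calc resolvent a r - resolvent a s
      = resolvent a r * ((algebraMap R A s - a) * resolvent a s)
        - (resolvent a r * (algebraMap R A r - a)) * resolvent a s := by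
        rw [resolvent, resolvent, Ring.mul_inverse_cancel _ hs, Ring.inverse_mul_cancel _ hr,
          mul_one, one_mul]
    _ = (s - r) • (resolvent a r * resolvent a s) := by
        rw [mul_assoc, ← mul_sub, ← sub_mul, hdiff, smul_one_mul, mul_smul_comm]

theorem lp.hasSum_norm_sq {ι : Type*} {E : ι → Type*} [∀ i, NormedAddCommGroup (E i)]
    (f : lp E 2) : HasSum (fun i => ‖f i‖ ^ 2) (‖f‖ ^ 2) := by
  simpa using lp.hasSum_norm (p := 2) (by norm_num) f

theorem tsum_subtype_mul_le_of_sum_le {ι : Type*} {p : ι → Prop} {w f : ι → ℝ} {W B : ℝ}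
    (hf : ∀ i, 0 ≤ f i) (hW : 0 ≤ W) (hw : ∀ i, p i → w i ≤ W)
    (hB : ∀ s : Finset ι, ∑ i ∈ s, f i ≤ B) :
    ∑' i : {i // p i}, w i * f i ≤ W * B := by
  have hB0 : 0 ≤ B := by simpa using hB ∅
  refine tsum_le_of_sum_le' (by positivity) fun s => ?_
  calc ∑ i ∈ s, w i * f i ≤ ∑ i ∈ s, W * f i := by
        gcongr with i
        · exact hf i
        · exact hw i i.2
    _ = W * ∑ i ∈ s.map (Function.Embedding.subtype p), f i := by
        rw [Finset.sum_map, Finset.mul_sum]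
        rfl
    _ ≤ W * B := by gcongr; exact hB _

theorem one_le_mul_rpow_neg_sq {T η : ℝ} (hT : 1 ≤ T) (hη : η ≤ 1 / 2) :
    1 ≤ T * (T ^ (-η)) ^ 2 := by
  have hT0 : 0 < T := by linarith
  calc 1 ≤ T ^ (1 + -η * 2) := Real.one_le_rpow hT (by linarith)
    _ = T * (T ^ (-η)) ^ 2 := by
      rw [Real.rpow_add hT0, Real.rpow_one, Real.rpow_mul hT0.le, Real.rpow_two]

namespace IsSelfAdjoint

variable {E : Type*} [NormedAddCommGroup E] [InnerProductSpace ℂ E] [CompleteSpace E]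
  {A : E →L[ℂ] E} {z : ℂ}

theorem mem_resolventSet_of_im_ne_zero (hA : IsSelfAdjoint A) (hz : z.im ≠ 0) :
    z ∈ resolventSet ℂ A := by
  by_contra hmem
  exact hz (hA.im_eq_zero_of_mem_spectrum hmem)

theorem im_inner_algebraMap_sub_apply (hA : IsSelfAdjoint A) (z : ℂ) (φ : E) :
    (inner ℂ φ ((algebraMap ℂ (E →L[ℂ] E) z - A) φ)).im = z.im * ‖φ‖ ^ 2 := by
  have h : (inner ℂ φ (A φ)).im = 0 := hA.isSymmetric.im_inner_self_apply φ
  rw [Algebra.algebraMap_eq_smul_one, sub_apply, smul_apply, one_apply_eq_self, inner_sub_right,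
    inner_smul_right, inner_self_eq_norm_sq_to_K, Complex.sub_im, h, sub_zero]
  simp [sq]

theorem abs_im_mul_norm_le (hA : IsSelfAdjoint A) (z : ℂ) (φ : E) :
    |z.im| * ‖φ‖ ≤ ‖(algebraMap ℂ (E →L[ℂ] E) z - A) φ‖ := by
  rcases (norm_nonneg φ).eq_or_lt with hφ | hφ
  · rw [← hφ, mul_zero]
    exact norm_nonneg _
  refine le_of_mul_le_mul_right ?_ hφ
  calc |z.im| * ‖φ‖ * ‖φ‖ = |(inner ℂ φ ((algebraMap ℂ (E →L[ℂ] E) z - A) φ)).im| := by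
        rw [hA.im_inner_algebraMap_sub_apply, abs_mul, abs_of_nonneg (sq_nonneg ‖φ‖), sq,
          mul_assoc]
    _ ≤ ‖φ‖ * ‖(algebraMap ℂ (E →L[ℂ] E) z - A) φ‖ :=
        (Complex.abs_im_le_norm _).trans (norm_inner_le_norm _ _)
    _ = ‖(algebraMap ℂ (E →L[ℂ] E) z - A) φ‖ * ‖φ‖ := mul_comm _ _

theorem algebraMap_sub_apply_resolvent_apply (hA : IsSelfAdjoint A) (hz : z.im ≠ 0) (ψ : E) :
    (algebraMap ℂ (E →L[ℂ] E) z - A) (resolvent A z ψ) = ψ := by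
  rw [← mul_apply_eq_comp, resolvent,
    Ring.mul_inverse_cancel _ (hA.mem_resolventSet_of_im_ne_zero hz)]
  rfl

theorem norm_resolvent_apply_le (hA : IsSelfAdjoint A) (hz : z.im ≠ 0) (ψ : E) :
    ‖resolvent A z ψ‖ ≤ ‖ψ‖ / |z.im| := by
  rw [le_div_iff₀ (abs_pos.mpr hz), mul_comm]
  simpa [hA.algebraMap_sub_apply_resolvent_apply hz] using
    hA.abs_im_mul_norm_le z (resolvent A z ψ)

theorem star_resolvent (hA : IsSelfAdjoint A) (z : ℂ) :
    star (resolvent A z) = resolvent A (conj z) := by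
  rw [resolvent, resolvent, ← Ring.inverse_star, star_sub, hA.star_eq,
    Algebra.algebraMap_eq_smul_one, Algebra.algebraMap_eq_smul_one, star_smul, star_one]
  rfl

/-- The Ward identity, from the resolvent identity `R(z) - R(z̄) = (z̄ - z) R(z) R(z̄)`
and `R(z)* = R(z̄)`. -/
theorem norm_star_resolvent_apply_sq (hA : IsSelfAdjoint A) (hz : z.im ≠ 0) (φ : E) :
    ‖star (resolvent A z) φ‖ ^ 2 = -(inner ℂ φ (resolvent A z φ)).im / z.im := by
  set R := resolvent A z
  set w := inner ℂ φ (R φ)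
  have hzc : (conj z).im ≠ 0 := by simpa using hz
  have hidentity : R - star R = (conj z - z) • (R * star R) := by
    rw [hA.star_resolvent z]
    exact spectrum.resolvent_sub_resolvent_eq_smul_mul
      (hA.mem_resolventSet_of_im_ne_zero hz) (hA.mem_resolventSet_of_im_ne_zero hzc)
  have hconj : inner ℂ φ (star R φ) = conj w := by
    rw [ContinuousLinearMap.star_eq_adjoint, ContinuousLinearMap.adjoint_inner_right,
      inner_conj_symm]
  have hinner : (conj z - z) * inner ℂ (star R φ) (star R φ) = w - conj w := by
    rw [ContinuousLinearMap.star_eq_adjoint, ContinuousLinearMap.adjoint_inner_left,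
      ← ContinuousLinearMap.star_eq_adjoint, ← mul_apply_eq_comp, ← inner_smul_right,
      ← smul_apply, ← hidentity, sub_apply, inner_sub_right, hconj]
  have hnorm : inner ℂ (star R φ) (star R φ) = ((‖star R φ‖ ^ 2 : ℝ) : ℂ) := by
    rw [inner_self_eq_norm_sq_to_K]; norm_cast
  have him := congrArg Complex.im hinner
  rw [hnorm, Complex.mul_im, Complex.ofReal_re, Complex.ofReal_im, Complex.sub_im,
    Complex.sub_re, Complex.conj_im, Complex.conj_re, Complex.sub_im, Complex.conj_im] at him
  rw [eq_div_iff hz]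
  linarith

end IsSelfAdjoint

section Lorentzian

variable {τ : ℝ}

theorem continuous_inv_sq_add_sq (hτ : 0 < τ) : Continuous fun x : ℝ => (x ^ 2 + τ ^ 2)⁻¹ :=
  by fun_prop (disch := intro x; positivity)

theorem intervalIntegral_inv_sub_sq_add_sq_le_pi_div (hτ : 0 < τ) (e x y : ℝ) :
    ∫ E in x..y, ((E - e) ^ 2 + τ ^ 2)⁻¹ ≤ π / τ := by
  have hderiv : ∀ E : ℝ, HasDerivAt (fun E => τ⁻¹ * Real.arctan ((E - e) / τ))
      ((E - e) ^ 2 + τ ^ 2)⁻¹ E := by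
    intro E
    have hlin : HasDerivAt (fun E => (E - e) / τ) τ⁻¹ E := by
      simpa using ((hasDerivAt_id E).sub_const e).div_const τ
    refine ((Real.hasDerivAt_arctan _).comp E hlin |>.const_mul τ⁻¹).congr_deriv ?_
    field_simp
    ring
  rw [intervalIntegral.integral_eq_sub_of_hasDerivAt (fun E _ => hderiv E)
    (((continuous_inv_sq_add_sq hτ).comp (continuous_sub_right e)).intervalIntegrable x y),
    ← mul_sub, inv_mul_eq_div]
  gcongr
  linarith [Real.arctan_lt_pi_div_two ((y - e) / τ), Real.neg_pi_div_two_lt_arctan ((x - e) / τ)]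

/-- On `[0, b]` the kernel is at most `4 / e²`, and `e² ≥ (e² + (2b)²) / 2`. -/
theorem intervalIntegral_inv_sub_sq_add_sq_le_of_lt_abs {b e : ℝ} (hb : 0 ≤ b)
    (he : 2 * b < |e|) (hτ : 0 < τ) :
    ∫ E in 0..b, ((E - e) ^ 2 + τ ^ 2)⁻¹ ≤ 8 * b * (e ^ 2 + (2 * b) ^ 2)⁻¹ := by
  have he2 : 0 < e ^ 2 := by nlinarith [abs_nonneg e, sq_abs e]
  have hpoint : ∀ E ∈ Set.Icc 0 b, ((E - e) ^ 2 + τ ^ 2)⁻¹ ≤ 4 / e ^ 2 := by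
    rintro E ⟨hE0, hEb⟩
    have hfar : |e| / 2 ≤ |E - e| := by
      rw [abs_sub_comm]
      linarith [abs_sub_abs_le_abs_sub e E, abs_of_nonneg hE0]
    rw [← inv_div]
    refine inv_anti₀ (by positivity) ?_
    nlinarith [sq_abs e, sq_abs (E - e), abs_nonneg e]
  calc ∫ E in 0..b, ((E - e) ^ 2 + τ ^ 2)⁻¹
      ≤ ∫ _ in 0..b, 4 / e ^ 2 :=
        intervalIntegral.integral_mono_on hb
          (((continuous_inv_sq_add_sq hτ).comp (continuous_sub_right e)).intervalIntegrable 0 b)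
          intervalIntegrable_const hpoint
    _ = 4 * b / e ^ 2 := by simp; ring
    _ ≤ 8 * b * (e ^ 2 + (2 * b) ^ 2)⁻¹ := by
        rw [← div_eq_mul_inv, div_le_div_iff₀ he2 (by positivity)]
        nlinarith [sq_abs e, mul_self_le_mul_self (by positivity) he.le]

variable (ν : Measure ℝ) [IsFiniteMeasure ν]

theorem continuous_integral_inv_sub_sq_add_sq (hτ : 0 < τ) :
    Continuous fun E => ∫ e, ((E - e) ^ 2 + τ ^ 2)⁻¹ ∂ν := by
  refine continuous_of_dominated (bound := fun _ => (τ ^ 2)⁻¹)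
    (fun E => ((continuous_inv_sq_add_sq hτ).comp (continuous_sub_left E)).aestronglyMeasurable)
    (fun E => .of_forall fun e => ?_) (integrable_const _)
    (.of_forall fun e => (continuous_inv_sq_add_sq hτ).comp (continuous_sub_right e))
  rw [Real.norm_of_nonneg (by positivity)]
  exact inv_anti₀ (by positivity) (by nlinarith [sq_nonneg (E - e)])

theorem intervalIntegral_integral_inv_sub_sq_add_sq_swap (hτ : 0 < τ) (b : ℝ) :
    ∫ E in 0..b, ∫ e, ((E - e) ^ 2 + τ ^ 2)⁻¹ ∂ν
      = ∫ e, (∫ E in 0..b, ((E - e) ^ 2 + τ ^ 2)⁻¹) ∂ν := by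
  have : IsFiniteMeasure (volume.restrict (Set.uIoc 0 b)) :=
    isFiniteMeasure_restrict.mpr (by simp [Set.uIoc])
  refine intervalIntegral_integral_swap (.of_bound ?_ (τ ^ 2)⁻¹ (.of_forall fun p => ?_))
  · exact ((continuous_inv_sq_add_sq hτ).comp
      (continuous_fst.sub continuous_snd)).aestronglyMeasurable
  · rw [Function.uncurry_apply_pair, Real.norm_of_nonneg (by positivity)]
    exact inv_anti₀ (by positivity) (by nlinarith [sq_nonneg (p.1 - p.2)])

variable {ν}

theorem integral_intervalIntegral_inv_sub_sq_add_sq_le {b L : ℝ} (hb : 0 < b) (hτ : 0 < τ)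
    (hnear : ν.real (Set.Icc (-(2 * b)) (2 * b)) ≤ L)
    (hfar : ∫ e, (e ^ 2 + (2 * b) ^ 2)⁻¹ ∂ν ≤ ((2 * b) ^ 2)⁻¹) :
    ∫ e, (∫ E in 0..b, ((E - e) ^ 2 + τ ^ 2)⁻¹) ∂ν ≤ L * (π / τ) + 2 / b := by
  set S := Set.Icc (-(2 * b)) (2 * b)
  have h2b : 0 < 2 * b := by positivity
  have hpoint : ∀ e, ∫ E in 0..b, ((E - e) ^ 2 + τ ^ 2)⁻¹
      ≤ S.indicator (fun _ => π / τ) e + 8 * b * (e ^ 2 + (2 * b) ^ 2)⁻¹ := by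
    intro e
    by_cases he : e ∈ S
    · rw [Set.indicator_of_mem he]
      have := intervalIntegral_inv_sub_sq_add_sq_le_pi_div hτ e 0 b
      have : 0 ≤ 8 * b * (e ^ 2 + (2 * b) ^ 2)⁻¹ := by positivity
      linarith
    · rw [Set.indicator_of_notMem he, zero_add]
      refine intervalIntegral_inv_sub_sq_add_sq_le_of_lt_abs hb.le ?_ hτ
      rwa [Set.mem_Icc, ← abs_le, not_le] at he
  have hint_near : Integrable (S.indicator fun _ => π / τ) ν :=
    (integrable_const _).indicator measurableSet_Icc
  have hint_far : Integrable (fun e => 8 * b * (e ^ 2 + (2 * b) ^ 2)⁻¹) ν :=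
    .of_bound ((continuous_inv_sq_add_sq h2b).const_mul _).aestronglyMeasurable
      (8 * b * ((2 * b) ^ 2)⁻¹) (.of_forall fun e => by
        rw [Real.norm_of_nonneg (by positivity)]
        gcongr
        nlinarith [sq_nonneg e])
  calc ∫ e, (∫ E in 0..b, ((E - e) ^ 2 + τ ^ 2)⁻¹) ∂ν
      ≤ ∫ e, (S.indicator (fun _ => π / τ) e + 8 * b * (e ^ 2 + (2 * b) ^ 2)⁻¹) ∂ν :=
        integral_mono_of_nonneg (.of_forall fun e => intervalIntegral.integral_nonneg hb.le
          fun E _ => by positivity) (hint_near.add hint_far) (.of_forall hpoint)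
    _ = ν.real S * (π / τ) + 8 * b * ∫ e, (e ^ 2 + (2 * b) ^ 2)⁻¹ ∂ν := by
        rw [integral_add hint_near hint_far, integral_indicator_const _ measurableSet_Icc,
          integral_const_mul, smul_eq_mul]
    _ ≤ L * (π / τ) + 8 * b * ((2 * b) ^ 2)⁻¹ := by gcongr
    _ = L * (π / τ) + 2 / b := by field_simp; ring

end Lorentzian

theorem integrable_inv_sub_ofReal {ν : Measure ℝ} [IsFiniteMeasure ν] {z : ℂ} (hz : z.im ≠ 0) :
    Integrable (fun e : ℝ => (z - (e : ℂ))⁻¹) ν := by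
  have hne : ∀ e : ℝ, z - (e : ℂ) ≠ 0 := fun e h => hz (by simpa using congrArg Complex.im h)
  refine .of_bound (Continuous.aestronglyMeasurable ?_) |z.im|⁻¹ (.of_forall fun e => ?_)
  · exact (continuous_const.sub Complex.continuous_ofReal).inv₀ hne
  · rw [norm_inv]
    refine inv_anti₀ (abs_pos.mpr hz) ?_
    simpa using Complex.abs_im_le_norm (z - e)

theorem im_inv_sub_ofReal (z : ℂ) (e : ℝ) :
    ((z - (e : ℂ))⁻¹).im = -(z.im / ((z.re - e) ^ 2 + z.im ^ 2)) := by
  rw [Complex.inv_im, Complex.normSq_apply]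
  simp [neg_div, sq]

theorem norm_delta (n : ℤ) : ‖delta n‖ = 1 := by
  simp [delta]

theorem inner_delta_right (f : Ltwo) (n : ℤ) : inner ℂ f (delta n) = conj (f n) := by
  classical
  simp [delta, lp.inner_single_right]

section Green

variable {c C : ℝ} (J : JacobiMatrix c C) {z : ℂ}

theorem green_eq_neg_inner_resolvent (z : ℂ) (n m : ℤ) :
    green J z n m = -inner ℂ (delta n) (resolvent J.H z (delta m)) := by
  have hneg : J.H - z • 1 = -(algebraMap ℂ (Ltwo →L[ℂ] Ltwo) z - J.H) := by
    rw [Algebra.algebraMap_eq_smul_one, neg_sub]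
  rw [green, hneg, Ring.inverse_neg, neg_apply, inner_neg_right, resolvent]

theorem norm_green_le (hz : z.im ≠ 0) (n m : ℤ) : ‖green J z n m‖ ≤ |z.im|⁻¹ := by
  calc ‖green J z n m‖ ≤ ‖delta n‖ * ‖resolvent J.H z (delta m)‖ := by
        rw [green_eq_neg_inner_resolvent, norm_neg]; exact norm_inner_le_norm _ _
    _ ≤ 1 * (1 / |z.im|) := by
        rw [norm_delta]
        gcongr
        simpa [norm_delta] using J.selfadj.norm_resolvent_apply_le hz (delta m)
    _ = |z.im|⁻¹ := by rw [one_mul, one_div]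

theorem hasSum_norm_green_sq (hz : z.im ≠ 0) (m : ℤ) :
    HasSum (fun n => ‖green J z m n‖ ^ 2) ((green J z m m).im / z.im) := by
  set φ := star (resolvent J.H z) (delta m)
  have hrow : ∀ n, ‖green J z m n‖ = ‖φ n‖ := by
    intro n
    rw [green_eq_neg_inner_resolvent, norm_neg, ← ContinuousLinearMap.adjoint_inner_left,
      ← ContinuousLinearMap.star_eq_adjoint, inner_delta_right, Complex.norm_conj]
  have hnorm : ‖φ‖ ^ 2 = (green J z m m).im / z.im := by
    rw [J.selfadj.norm_star_resolvent_apply_sq hz, green_eq_neg_inner_resolvent, Complex.neg_im]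
  simpa only [hrow, hnorm] using lp.hasSum_norm_sq φ

theorem continuousAt_green (hz : z.im ≠ 0) (n m : ℤ) :
    ContinuousAt (fun z => green J z n m) z := by
  have hres : ContinuousAt (resolvent J.H) z :=
    (spectrum.hasDerivAt_resolvent_const_left
      (J.selfadj.mem_resolventSet_of_im_ne_zero hz)).continuousAt
  simp only [green_eq_neg_inner_resolvent]
  exact ((continuous_const.inner
    (ContinuousLinearMap.apply ℂ Ltwo (delta m)).continuous).continuousAt.comp hres).neg

end Green

section Averaged

variable {Ω : Type*} [MeasurableSpace Ω] {P : Measure Ω} [IsProbabilityMeasure P] {c C : ℝ}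
  {J : Ω → JacobiMatrix c C} {z : ℂ}
  (hmeas : ∀ (z : ℂ) (n m : ℤ), Measurable fun ω => green (J ω) z n m)
include hmeas

theorem integrable_green (hz : z.im ≠ 0) (n m : ℤ) :
    Integrable (fun ω => green (J ω) z n m) P :=
  .of_bound (hmeas z n m).aestronglyMeasurable _
    (.of_forall fun ω => norm_green_le (J ω) hz n m)

theorem integrable_norm_green_sq (hz : z.im ≠ 0) (n m : ℤ) :
    Integrable (fun ω => ‖green (J ω) z n m‖ ^ 2) P :=
  .of_bound ((hmeas z n m).norm.pow_const 2).aestronglyMeasurable (|z.im|⁻¹ ^ 2)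
    (.of_forall fun ω => by
      rw [norm_pow, norm_norm]
      exact pow_le_pow_left₀ (norm_nonneg _) (norm_green_le (J ω) hz n m) 2)

theorem continuous_integral_norm_green_sq {w : ℂ} (hw : w.im ≠ 0) (n m : ℤ) :
    Continuous fun E : ℝ => ∫ ω, ‖green (J ω) (E + w) n m‖ ^ 2 ∂P := by
  have him : ∀ E : ℝ, ((E : ℂ) + w).im = w.im := by simp
  refine continuous_of_dominated (bound := fun _ => |w.im|⁻¹ ^ 2)
    (fun E => ((hmeas _ n m).norm.pow_const 2).aestronglyMeasurable) (fun E => ?_)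
    (integrable_const _) (.of_forall fun ω => ?_)
  · refine .of_forall fun ω => ?_
    rw [norm_pow, norm_norm, ← him E]
    exact pow_le_pow_left₀ (norm_nonneg _) (norm_green_le (J ω) (by rwa [him]) n m) 2
  · rw [continuous_iff_continuousAt]
    intro E
    have hline : Continuous fun E : ℝ => (E : ℂ) + w := by fun_prop
    exact ((continuousAt_green (J ω) (by rwa [him]) n m).comp hline.continuousAt).norm.pow 2

variable {ν : Measure ℝ} [IsFiniteMeasure ν]
  (hν : ∀ z : ℂ, 0 < z.im →
      ∫ e : ℝ, (z - (e : ℂ))⁻¹ ∂ν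
        = ∫ ω, inner (𝕜 := ℂ) (delta 0) ((Ring.inverse (z • 1 - (J ω).H)) (delta 0)) ∂P)
include hν

theorem integral_im_green_eq (hz : 0 < z.im) :
    ∫ ω, (green (J ω) z 0 0).im ∂P = ∫ e, z.im / ((z.re - e) ^ 2 + z.im ^ 2) ∂ν := by
  have hres : ∀ ω, inner ℂ (delta 0) (Ring.inverse (z • 1 - (J ω).H) (delta 0))
      = -green (J ω) z 0 0 := by
    intro ω
    rw [green_eq_neg_inner_resolvent, neg_neg, resolvent, Algebra.algebraMap_eq_smul_one]
  have hG : ∫ ω, (green (J ω) z 0 0).im ∂P = (∫ ω, green (J ω) z 0 0 ∂P).im :=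
    integral_im (integrable_green hmeas hz.ne' 0 0)
  have hν' : ∫ e, ((z - (e : ℂ))⁻¹).im ∂ν = (∫ e, (z - (e : ℂ))⁻¹ ∂ν).im :=
    integral_im (integrable_inv_sub_ofReal hz.ne')
  simp_rw [im_inv_sub_ofReal, integral_neg, hν z hz, hres, integral_neg, Complex.neg_im,
    neg_inj] at hν'
  rw [hG, hν']

/-- In effect `ν ℝ ≤ 1`: the Borel transform of `ν` at `i a` is, up to sign, the average of
`G^{ia}(0,0)`, of modulus at most `1 / a`. -/
theorem integral_inv_sq_add_sq_le {a : ℝ} (ha : 0 < a) :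
    ∫ e, (e ^ 2 + a ^ 2)⁻¹ ∂ν ≤ (a ^ 2)⁻¹ := by
  have hz : 0 < ((a : ℂ) * Complex.I).im := by simpa using ha
  have hbound : ∫ ω, (green (J ω) (a * Complex.I) 0 0).im ∂P ≤ a⁻¹ := by
    refine (integral_mono (integrable_green hmeas hz.ne' 0 0).im (integrable_const a⁻¹)
      fun ω => ?_).trans_eq (by simp)
    simpa [abs_of_pos ha] using
      (Complex.im_le_norm _).trans (norm_green_le (J ω) hz.ne' 0 0)
  have hpoisson := integral_im_green_eq hmeas hν hz
  simp only [Complex.mul_im, Complex.ofReal_re, Complex.I_im, Complex.ofReal_im, Complex.I_re,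
    Complex.mul_re, mul_zero, mul_one, sub_zero, add_zero, zero_sub, neg_sq] at hpoisson
  rw [hpoisson] at hbound
  simp_rw [div_eq_mul_inv a] at hbound
  rw [integral_const_mul] at hbound
  rw [show (a ^ 2)⁻¹ = a⁻¹ / a by field_simp, le_div_iff₀ ha, mul_comm]
  exact hbound

theorem sum_integral_norm_green_sq_le (hz : 0 < z.im) (s : Finset ℤ) :
    ∑ n ∈ s, ∫ ω, ‖green (J ω) z 0 n‖ ^ 2 ∂P ≤ ∫ e, ((z.re - e) ^ 2 + z.im ^ 2)⁻¹ ∂ν := by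
  have hrow : ∀ ω, ∑ n ∈ s, ‖green (J ω) z 0 n‖ ^ 2 ≤ (green (J ω) z 0 0).im / z.im :=
    fun ω => sum_le_hasSum s (fun n _ => sq_nonneg _) (hasSum_norm_green_sq (J ω) hz.ne' 0)
  calc ∑ n ∈ s, ∫ ω, ‖green (J ω) z 0 n‖ ^ 2 ∂P
      = ∫ ω, ∑ n ∈ s, ‖green (J ω) z 0 n‖ ^ 2 ∂P :=
        (integral_finsetSum s fun n _ => integrable_norm_green_sq hmeas hz.ne' 0 n).symm
    _ ≤ ∫ ω, (green (J ω) z 0 0).im / z.im ∂P :=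
        integral_mono (integrable_finsetSum s fun n _ => integrable_norm_green_sq hmeas hz.ne' 0 n)
          ((integrable_green hmeas hz.ne' 0 0).im.div_const _) hrow
    _ = ∫ e, ((z.re - e) ^ 2 + z.im ^ 2)⁻¹ ∂ν := by
        rw [integral_div, integral_im_green_eq hmeas hν hz, ← integral_div]
        congr 1 with e
        field_simp

theorem sum_intervalIntegral_integral_norm_green_sq_le {T b L : ℝ} (hT : 0 < T) (hb : 0 < b)
    (hnear : ν.real (Set.Icc (-(2 * b)) (2 * b)) ≤ L) (s : Finset ℤ) :
    ∑ k ∈ s, ∫ E in (0:ℝ)..b,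
        (∫ ω, ‖green (J ω) ((E : ℂ) + Complex.I / (T : ℂ)) 0 k‖ ^ 2 ∂P) / (π * T)
      ≤ L + 2 / (π * T * b) := by
  have him : (Complex.I / (T : ℂ)).im = T⁻¹ := by simp
  have hw : 0 < (Complex.I / (T : ℂ)).im := by rw [him]; positivity
  have hgreen : ∀ k : ℤ, Continuous fun E : ℝ =>
      ∫ ω, ‖green (J ω) ((E : ℂ) + Complex.I / (T : ℂ)) 0 k‖ ^ 2 ∂P :=
    fun k => continuous_integral_norm_green_sq hmeas hw.ne' 0 k
  have hpoint : ∀ E : ℝ, ∑ k ∈ s, ∫ ω, ‖green (J ω) ((E : ℂ) + Complex.I / (T : ℂ)) 0 k‖ ^ 2 ∂P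
      ≤ ∫ e, ((E - e) ^ 2 + T⁻¹ ^ 2)⁻¹ ∂ν := by
    intro E
    simpa [him] using sum_integral_norm_green_sq_le hmeas hν
      (z := (E : ℂ) + Complex.I / (T : ℂ)) (by simpa using hw) s
  calc ∑ k ∈ s, ∫ E in (0:ℝ)..b,
        (∫ ω, ‖green (J ω) ((E : ℂ) + Complex.I / (T : ℂ)) 0 k‖ ^ 2 ∂P) / (π * T)
      = ∫ E in (0:ℝ)..b,
        (∑ k ∈ s, ∫ ω, ‖green (J ω) ((E : ℂ) + Complex.I / (T : ℂ)) 0 k‖ ^ 2 ∂P) / (π * T) := by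
        rw [← intervalIntegral.integral_finsetSum fun k _ =>
          ((hgreen k).div_const _).intervalIntegrable 0 b]
        simp_rw [Finset.sum_div]
    _ ≤ ∫ E in (0:ℝ)..b, (∫ e, ((E - e) ^ 2 + T⁻¹ ^ 2)⁻¹ ∂ν) / (π * T) := by
        refine intervalIntegral.integral_mono_on hb.le ?_ ?_ fun E _ => ?_
        · exact ((continuous_finsetSum s fun k _ => hgreen k).div_const _).intervalIntegrable 0 b
        · exact ((continuous_integral_inv_sub_sq_add_sq ν (by positivity)).div_const _
            ).intervalIntegrable 0 b
        · gcongr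
          exact hpoint E
    _ = (∫ e, (∫ E in (0:ℝ)..b, ((E - e) ^ 2 + T⁻¹ ^ 2)⁻¹) ∂ν) / (π * T) := by
        rw [intervalIntegral.integral_div,
          intervalIntegral_integral_inv_sub_sq_add_sq_swap ν (by positivity)]
    _ ≤ (L * (π / T⁻¹) + 2 / b) / (π * T) := by
        gcongr
        exact integral_intervalIntegral_inv_sub_sq_add_sq_le hb (by positivity) hnear
          (integral_inv_sq_add_sq_le hmeas hν (by positivity))
    _ = L + 2 / (π * T * b) := by field_simp

end Averaged

theorem stmt19_general {Ω : Type*} [MeasurableSpace Ω] (P : Measure Ω) [IsProbabilityMeasure P]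
    (c C : ℝ) (J : Ω → JacobiMatrix c C)
    (hmeas : ∀ (z : ℂ) (n m : ℤ), Measurable fun ω => green (J ω) z n m)
    (ν : Measure ℝ) [IsFiniteMeasure ν]
    (hν : ∀ z : ℂ, 0 < z.im →
      ∫ e : ℝ, (z - (e : ℂ))⁻¹ ∂ν
        = ∫ ω, inner (𝕜 := ℂ) (delta 0) ((Ring.inverse (z • 1 - (J ω).H)) (delta 0)) ∂P)
    (C' : ℝ) (hC' : ∀ ε : ℝ, 0 < ε → ν (Set.Icc (-ε) ε) ≤ ENNReal.ofReal (C' * ε))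
    (q α η : ℝ) (hq : 0 < q) (hη : η = min q (1 / 2)) :
    ∃ C₁ : ℝ, ∀ T : ℝ, 2 ≤ T →
      ∑' n : {k : ℤ // |(k : ℝ)| ≤ T ^ (1 + α)},
          |((n : ℤ) : ℝ)| ^ q * ∫ E in (0:ℝ)..(T ^ (-η)),
            (∫ ω, ‖green (J ω) ((E : ℂ) + Complex.I / (T : ℂ)) 0 (n : ℤ)‖ ^ 2 ∂P)
              / (Real.pi * T)
        ≤ C₁ * T ^ (q - η + α * q) := by
  set M := max C' 0
  refine ⟨2 * M + 2 / π, fun T hT => ?_⟩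
  have hT0 : 0 < T := by linarith
  set b := T ^ (-η) with hb_def
  have hb : 0 < b := Real.rpow_pos_of_pos hT0 _
  have hnear : ν.real (Set.Icc (-(2 * b)) (2 * b)) ≤ 2 * M * b :=
    ENNReal.toReal_le_of_le_ofReal (by positivity) <| (hC' _ (by positivity)).trans <|
      ENNReal.ofReal_le_ofReal (by nlinarith [le_max_left C' 0])
  -- `η ≤ 1 / 2`, i.e. `T b² ≥ 1`, keeps the far-field term below the near-field one.
  have hfar : 2 / (π * T * b) ≤ 2 / π * b := by
    have hTb : 1 ≤ T * b ^ 2 := one_le_mul_rpow_neg_sq (by linarith) (hη ▸ min_le_right q (1 / 2))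
    rw [div_le_iff₀ (by positivity), show 2 / π * b * (π * T * b) = 2 * (T * b ^ 2) by
      field_simp]
    linarith
  calc _ ≤ T ^ ((1 + α) * q) * ((2 * M + 2 / π) * b) := by
        refine tsum_subtype_mul_le_of_sum_le (w := fun k : ℤ => |(k : ℝ)| ^ q)
          (f := fun k : ℤ => ∫ E in (0:ℝ)..b,
            (∫ ω, ‖green (J ω) ((E : ℂ) + Complex.I / (T : ℂ)) 0 k‖ ^ 2 ∂P) / (π * T))
          (fun k => intervalIntegral.integral_nonneg hb.le fun E _ => by positivity)
          (by positivity)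
          (fun k hk => (Real.rpow_le_rpow (abs_nonneg _) hk hq.le).trans_eq
            (Real.rpow_mul hT0.le _ _).symm)
          (fun s => ?_)
        linarith [sum_intervalIntegral_integral_norm_green_sq_le hmeas hν hT0 hb hnear s]
    _ = (2 * M + 2 / π) * T ^ (q - η + α * q) := by
        rw [mul_left_comm, hb_def, ← Real.rpow_add hT0]
        ring_nf

/-- Lemma 9: the central-region bound
`Σ_{0≤|n|≤T^{1+α}} |n|^q ∫₀^{T^{-η}} (dE/(πT)) E|G_ω^{E+i/T}(0,n)|² ≤ C₁ T^{q-η+αq}`,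
where `η = min{q,1/2}` and the averaged spectral measure `ν` (characterized by its
Borel transform `B_ν(z) = E⟨δ₀,(z-H_ω)⁻¹δ₀⟩`) is Lipschitz at the energy `0`. -/
theorem stmt19 {Ω : Type*} [MeasurableSpace Ω] (P : Measure Ω) [IsProbabilityMeasure P]
    (c C : ℝ) (hc : 0 < c) (hcC : c ≤ C) (J : Ω → JacobiMatrix c C)
    (hmeas : ∀ (z : ℂ) (n m : ℤ), Measurable fun ω => green (J ω) z n m)
    (ν : Measure ℝ) [IsFiniteMeasure ν]
    (hν : ∀ z : ℂ, 0 < z.im →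
      ∫ e : ℝ, (z - (e : ℂ))⁻¹ ∂ν
        = ∫ ω, inner (𝕜 := ℂ) (delta 0) ((Ring.inverse (z • 1 - (J ω).H)) (delta 0)) ∂P)
    (C' : ℝ) (hC' : ∀ ε : ℝ, 0 < ε → ν (Set.Icc (-ε) ε) ≤ ENNReal.ofReal (C' * ε))
    (q α η : ℝ) (hq : 0 < q) (hα : 0 < α) (hη : η = min q (1 / 2)) :
    ∃ C₁ : ℝ, ∀ T : ℝ, 2 ≤ T →
      ∑' n : {k : ℤ // |(k : ℝ)| ≤ T ^ (1 + α)},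
          |((n : ℤ) : ℝ)| ^ q * ∫ E in (0:ℝ)..(T ^ (-η)),
            (∫ ω, ‖green (J ω) ((E : ℂ) + Complex.I / (T : ℂ)) 0 (n : ℤ)‖ ^ 2 ∂P)
              / (Real.pi * T)
        ≤ C₁ * T ^ (q - η + α * q) :=
  stmt19_general P c C J hmeas ν hν C' hC' q α η hq hη

end
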